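/- Let A and B be closed subsets of a Banach space X and let x̄ ∈ A ∩ B. Then A and B are transversal at x̄ if and only if there exist δ > 0 and κ̂ > 0 such that for all a, b ∈ X with ‖a‖ ≤ δ and ‖b‖ ≤ δ, and all x ∈ (A − a) ∩ B_δ(x̄) and y ∈ (B − b) ∩ B_δ(x̄) with x ≠ y, the slope satisfies |∇φ_{a,b}|(x, y) = limsup_{(u,v)→(x,y)} max{φ_{a,b}(x,y) − φ_{a,b}(u,v), 0} / ‖(x,y) − (u,v)‖ ≥ κ̂, where φ_{a,b} denotes the coupling function of the sets A − a and B − b. -/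

import Mathlib

open Metric Set
open scoped ENNReal

/-- Transversality of closed sets `A`, `B` at a point `x0 ∈ A ∩ B`: the subtransversality
inequality holds uniformly for all small translations of both sets. -/
def Transversal {X : Type*} [NormedAddCommGroup X] (A B : Set X) (x0 : X) : Prop :=
  ∃ K > 0, ∃ δ > 0, ∀ a ∈ Metric.ball (0 : X) δ, ∀ b ∈ Metric.ball (0 : X) δ,
    ∀ x ∈ Metric.ball x0 δ,
      EMetric.infEdist x (((· - a) '' A) ∩ ((· - b) '' B)) ≤
        ENNReal.ofReal K *
          (EMetric.infEdist x ((· - a) '' A) + EMetric.infEdist x ((· - b) '' B))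

/-- `setInd S x` is `0` if `x ∈ S` and `+∞` otherwise (indicator in `ℝ≥0∞`). -/
noncomputable def setInd {X : Type*} (S : Set X) (x : X) : ℝ≥0∞ :=
  ⨅ (_ : x ∈ S), 0

/-- The coupling function `φ(x,y) = δ_A(x) + d(x,y) + δ_B(y)` of the sets `A` and `B`. -/
noncomputable def coupling {X : Type*} [MetricSpace X] (A B : Set X) (p : X × X) : ℝ≥0∞ :=
  setInd A p.1 + ENNReal.ofReal (dist p.1 p.2) + setInd B p.2

/-- The nonlocal slope `|∇φ|◇(x,y)` of the coupling function of `A` and `B`,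
with `X × X` carrying the sum metric. -/
noncomputable def couplingNLSlope {X : Type*} [MetricSpace X] (A B : Set X) (x y : X) : ℝ≥0∞ :=
  ⨆ (p : X × X) (_ : p ≠ (x, y)),
    (coupling A B (x, y) - coupling A B p) / ENNReal.ofReal (dist x p.1 + dist y p.2)

/-- The (local) slope `|∇φ|(x,y)` of the coupling function of `A` and `B`,
with `X × X` carrying the sum metric. -/
noncomputable def couplingSlope {X : Type*} [MetricSpace X] (A B : Set X) (x y : X) : ℝ≥0∞ :=
  Filter.limsup
    (fun p : X × X =>
      (coupling A B (x, y) - coupling A B p) / ENNReal.ofReal (dist x p.1 + dist y p.2))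
    (nhdsWithin (x, y) {q | q ≠ (x, y)})


/-!
(⇒) Translating the second set by `(1 - t) • (y - x)` puts a point of it at distance `t‖y - x‖`
from `x`, so transversality yields a pair `(z, v) ∈ (A - a) × (B - b)` with `‖z - v‖ = (1 - t)‖x - y‖`
within `O(t‖x - y‖)` of `(x, y)`: the coupling function drops by `t‖x - y‖` over that distance,
which bounds the slope below uniformly.

(⇐) Given `u ∈ A - a`, `v ∈ B - b`, Ekeland's variational principle for `(p, q) ↦ ‖p - q‖` on the
complete space `(A - a) × (B - b)`, with a parameter `α` below the slope bound, gives a point whose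
nonlocal slope is at most `α`. It therefore lies on the diagonal, i.e. in the intersection, at
distance at most `‖u - v‖ / α` from `u`, whence the transversality constant `1 + 1 / α`.
-/

open Filter Topology

lemma exists_mem_forall_le_add_of_bddBelow {Y : Type*} {f : Y → ℝ} {s : Set Y}
    (hs : s.Nonempty) (hf : BddBelow (f '' s)) {ε : ℝ} (hε : 0 < ε) :
    ∃ y ∈ s, ∀ p ∈ s, f y ≤ f p + ε := by
  obtain ⟨_, ⟨y, hy, rfl⟩, hlt⟩ := Real.lt_sInf_add_pos (hs.image f) hε
  exact ⟨y, hy, fun p hp => hlt.le.trans <| by gcongr; exact csInf_le hf (mem_image_of_mem f hp)⟩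

section Ekeland

variable {Y : Type*} [MetricSpace Y] {f : Y → ℝ} {α : ℝ}

def ekelandSet (f : Y → ℝ) (α : ℝ) (x : Y) : Set Y := {p | f p + α * dist x p ≤ f x}

lemma self_mem_ekelandSet (x : Y) : x ∈ ekelandSet f α x := by simp [ekelandSet]

lemma ekelandSet_subset_of_mem (hα : 0 ≤ α) {x p : Y} (hp : p ∈ ekelandSet f α x) :
    ekelandSet f α p ⊆ ekelandSet f α x := fun q (hq : f q + α * dist p q ≤ f p) =>
  show f q + α * dist x q ≤ f x by
    nlinarith [dist_triangle x p q, show f p + α * dist x p ≤ f x from hp]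

lemma LowerSemicontinuous.isClosed_ekelandSet (hf : LowerSemicontinuous f) (x : Y) :
    IsClosed (ekelandSet f α x) :=
  (hf.add (continuous_const.mul (continuous_const.dist continuous_id)).lowerSemicontinuous
    ).isClosed_preimage (f x)

lemma ekelandSet_subset_closedBall (hα : 0 < α) {x : Y} {ε : ℝ}
    (hx : ∀ p ∈ ekelandSet f α x, f x ≤ f p + ε) :
    ekelandSet f α x ⊆ closedBall x (ε / α) := by
  intro p hp
  rw [mem_closedBall, dist_comm, le_div_iff₀' hα]
  linarith [hx p hp, show f p + α * dist x p ≤ f x from hp]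

theorem LowerSemicontinuous.exists_ekeland_point [CompleteSpace Y] (hf : LowerSemicontinuous f)
    (hbdd : BddBelow (range f)) (hα : 0 < α) (x₀ : Y) :
    ∃ y, f y + α * dist x₀ y ≤ f x₀ ∧ ∀ p, f y ≤ f p + α * dist y p := by
  have hstep (x : Y) (n : ℕ) : ∃ x' ∈ ekelandSet f α x,
      ∀ p ∈ ekelandSet f α x, f x' ≤ f p + 1 / (n + 1) :=
    exists_mem_forall_le_add_of_bddBelow ⟨x, self_mem_ekelandSet x⟩
      (hbdd.mono (image_subset_range _ _)) Nat.one_div_pos_of_nat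
  -- each step minimises `f` on the current set up to `1 / (n + 1)`, so the sets shrink to a point
  choose next hnext_mem hnext_le using hstep
  let x : ℕ → Y := fun n => Nat.rec x₀ (fun n xn => next xn n) n
  let S : ℕ → Set Y := fun n => ekelandSet f α (x n)
  have hS_succ (n : ℕ) : S (n + 1) ⊆ S n := ekelandSet_subset_of_mem hα.le (hnext_mem (x n) n)
  have hS_ball (n : ℕ) : S (n + 1) ⊆ closedBall (x (n + 1)) (1 / (n + 1) / α) :=
    ekelandSet_subset_closedBall hα fun p hp => hnext_le (x n) n p (hS_succ n hp)
  have hS_bdd (n : ℕ) : Bornology.IsBounded (S (n + 1)) := isBounded_closedBall.subset (hS_ball n)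
  have hS_diam : Tendsto (fun n => diam (S (n + 1))) atTop (𝓝 0) := by
    refine squeeze_zero (fun _ => diam_nonneg) (fun n => (diam_mono (hS_ball n)
      isBounded_closedBall).trans (diam_closedBall (by positivity))) ?_
    simpa using (tendsto_one_div_add_atTop_nhds_zero_nat.div_const α).const_mul 2
  obtain ⟨y, hy⟩ : (⋂ n, S (n + 1)).Nonempty :=
    nonempty_iInter_of_nonempty_biInter (fun n => hf.isClosed_ekelandSet _) hS_bdd
      (fun N => ⟨x (N + 1), mem_iInter₂.2 fun n hn =>
        antitone_nat_of_succ_le hS_succ (Nat.succ_le_succ hn) (self_mem_ekelandSet _)⟩) hS_diam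
  rw [mem_iInter] at hy
  refine ⟨y, hS_succ 0 (hy 0), fun p => ?_⟩
  by_cases hp : p ∈ ekelandSet f α y
  · have hpy : dist y p ≤ 0 := ge_of_tendsto' hS_diam fun n =>
      dist_le_diam_of_mem (hS_bdd n) (hy n) (ekelandSet_subset_of_mem hα.le (hy n) hp)
    simp [dist_le_zero.1 hpy]
  · exact (not_le.1 hp).le

end Ekeland

lemma infEDist_le_mul_add_of_forall {X : Type*} [PseudoEMetricSpace X] {x : X} {S T W : Set X}
    {K : ℝ≥0∞} (hK₀ : K ≠ 0) (hK : K ≠ ⊤)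
    (h : ∀ u ∈ S, ∀ v ∈ T, infEDist x W ≤ K * (edist x u + edist x v)) :
    infEDist x W ≤ K * (infEDist x S + infEDist x T) := by
  simp only [infEDist, ENNReal.iInf_add, ENNReal.add_iInf, ENNReal.mul_iInf_of_ne hK₀ hK]
  exact le_iInf₂ fun v hv => le_iInf₂ fun u hu => h u hu v hv

section Translation

variable {X : Type*} [NormedAddCommGroup X] {S : Set X}

lemma mem_image_sub_right_iff {c v : X} : v ∈ (· - c) '' S ↔ v + c ∈ S := by
  rw [Set.image_sub_right]; rfl

lemma IsClosed.image_sub_right (hS : IsClosed S) (c : X) : IsClosed ((· - c) '' S) := by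
  rw [Set.image_sub_right]; exact hS.preimage (continuous_add_const c)

lemma image_sub_right_image_sub_right (b c : X) :
    (· - c) '' ((· - b) '' S) = (· - (b + c)) '' S := by
  rw [Set.image_image]; simp_rw [sub_sub]

end Translation

lemma setInd_of_mem {X : Type*} {S : Set X} {x : X} (h : x ∈ S) : setInd S x = 0 := by
  simp [setInd, h]

lemma setInd_of_notMem {X : Type*} {S : Set X} {x : X} (h : x ∉ S) : setInd S x = ⊤ := by
  simp [setInd, h]

section Coupling

variable {X : Type*} [MetricSpace X] {A B : Set X}

lemma coupling_of_mem {x y : X} (hx : x ∈ A) (hy : y ∈ B) :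
    coupling A B (x, y) = ENNReal.ofReal (dist x y) := by
  simp [coupling, setInd_of_mem hx, setInd_of_mem hy]

lemma coupling_of_notMem_prod {p : X × X} (hp : p ∉ A ×ˢ B) : coupling A B p = ⊤ := by
  rw [mem_prod, not_and_or] at hp
  rcases hp with hp | hp <;> simp [coupling, setInd_of_notMem hp]

lemma couplingSlope_le_couplingNLSlope (x y : X) :
    couplingSlope A B x y ≤ couplingNLSlope A B x y :=
  limsup_le_of_le (by isBoundedDefault) <| eventually_nhdsWithin_of_forall fun p hp =>
    le_iSup₂ (f := fun p (_ : p ≠ (x, y)) =>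
      (coupling A B (x, y) - coupling A B p) / ENNReal.ofReal (dist x p.1 + dist y p.2)) p hp

lemma le_couplingSlope_of_forall {x y : X} {c : ℝ≥0∞}
    (h : ∀ ε > 0, ∃ p : X × X, p ≠ (x, y) ∧ dist x p.1 + dist y p.2 < ε ∧
      c ≤ (coupling A B (x, y) - coupling A B p) / ENNReal.ofReal (dist x p.1 + dist y p.2)) :
    c ≤ couplingSlope A B x y := by
  refine le_limsup_of_frequently_le ?_ (by isBoundedDefault)
  rw [frequently_nhdsWithin_iff, nhds_basis_ball.frequently_iff]
  intro ε hε
  obtain ⟨p, hne, hsum, hc⟩ := h ε hε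
  refine ⟨p, ?_, hc, hne⟩
  rw [mem_ball, Prod.dist_eq, dist_comm p.1, dist_comm p.2]
  exact max_lt (by linarith [dist_nonneg (x := y) (y := p.2)])
    (by linarith [dist_nonneg (x := x) (y := p.1)])

lemma couplingNLSlope_le_of_forall {x y : X} (hx : x ∈ A) (hy : y ∈ B) {α : ℝ}
    (hα : 0 ≤ α)
    (h : ∀ p ∈ A, ∀ q ∈ B, dist x y ≤ dist p q + α * (dist x p + dist y q)) :
    couplingNLSlope A B x y ≤ ENNReal.ofReal α := by
  refine iSup₂_le fun p _ => ENNReal.div_le_of_le_mul ?_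
  by_cases hp : p ∈ A ×ˢ B
  · rw [coupling_of_mem hx hy, ← Prod.mk.eta (p := p), coupling_of_mem hp.1 hp.2,
      ← ENNReal.ofReal_sub _ dist_nonneg, ← ENNReal.ofReal_mul hα]
    exact ENNReal.ofReal_le_ofReal (by linarith [h p.1 hp.1 p.2 hp.2])
  · simp [coupling_of_notMem_prod hp]

end Coupling

section Forward

variable {X : Type*} [NormedAddCommGroup X] [NormedSpace ℝ X] {A B : Set X}

lemma exists_near_pair_dist_eq_one_sub_mul {x y : X} (hx : x ∈ A) (hy : y ∈ B) (hxy : x ≠ y)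
    {t K : ℝ} (ht₀ : 0 < t) (ht₁ : t ≤ 1) (hK : 0 ≤ K)
    (htrans : infEDist x (A ∩ (· - (1 - t) • (y - x)) '' B) ≤
      ENNReal.ofReal K * (infEDist x A + infEDist x ((· - (1 - t) • (y - x)) '' B))) :
    ∃ z ∈ A, ∃ v ∈ B, dist z v = (1 - t) * dist x y ∧
      dist x z + dist y v ≤ (2 * K + 3) * (t * dist x y) := by
  have hr : 0 < t * dist x y := mul_pos ht₀ (dist_pos.2 hxy)
  have hmem : x + t • (y - x) ∈ (· - (1 - t) • (y - x)) '' B :=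
    mem_image_sub_right_iff.2 (by convert hy using 1; module)
  have hnear : infEDist x (A ∩ (· - (1 - t) • (y - x)) '' B) <
      ENNReal.ofReal ((K + 1) * (t * dist x y)) := by
    refine htrans.trans_lt ?_
    rw [infEDist_zero_of_mem hx, zero_add]
    calc ENNReal.ofReal K * infEDist x ((· - (1 - t) • (y - x)) '' B)
        ≤ ENNReal.ofReal K * ENNReal.ofReal (t * dist x y) := by
          gcongr
          refine (infEDist_le_edist_of_mem hmem).trans_eq ?_
          rw [edist_dist, dist_self_add_right, norm_smul, Real.norm_of_nonneg ht₀.le, dist_comm,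
            dist_eq_norm]
      _ < ENNReal.ofReal ((K + 1) * (t * dist x y)) := by
          rw [← ENNReal.ofReal_mul hK, ENNReal.ofReal_lt_ofReal_iff (by positivity)]
          linarith
  obtain ⟨z, ⟨hzA, hzB⟩, hz⟩ := infEDist_lt_iff.1 hnear
  rw [edist_dist, ENNReal.ofReal_lt_ofReal_iff (by positivity)] at hz
  refine ⟨z, hzA, z + (1 - t) • (y - x), mem_image_sub_right_iff.1 hzB, ?_, ?_⟩
  · rw [dist_self_add_right, norm_smul, Real.norm_of_nonneg (by linarith), dist_comm,
      dist_eq_norm]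
  · have hyv : dist y (z + (1 - t) • (y - x)) ≤ t * dist x y + dist x z := by
      calc dist y (z + (1 - t) • (y - x)) = ‖t • (y - x) + (x - z)‖ := by
            rw [dist_eq_norm]; congr 1; module
        _ ≤ t * dist x y + dist x z := by
            refine (norm_add_le _ _).trans_eq ?_
            rw [norm_smul, Real.norm_of_nonneg ht₀.le, dist_comm x y, dist_eq_norm, dist_eq_norm]
    linarith

lemma Transversal.exists_le_couplingSlope {xbar : X} (hT : Transversal A B xbar) :
    ∃ δ > 0, ∃ κ > 0, ∀ a b : X, ‖a‖ ≤ δ → ‖b‖ ≤ δ →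
      ∀ x ∈ ((· - a) '' A) ∩ Metric.ball xbar δ,
        ∀ y ∈ ((· - b) '' B) ∩ Metric.ball xbar δ, x ≠ y →
          ENNReal.ofReal κ ≤ couplingSlope ((· - a) '' A) ((· - b) '' B) x y := by
  obtain ⟨K, hK, δ, hδ, htrans⟩ := hT
  refine ⟨δ / 4, by positivity, 1 / (2 * K + 3), by positivity, ?_⟩
  rintro a b ha hb x ⟨hxA, hx⟩ y ⟨hyB, hy⟩ hxy
  have hr : 0 < dist x y := dist_pos.2 hxy
  have hr' : dist x y < δ / 2 := by
    linarith [dist_triangle_right x y xbar, mem_ball.1 hx, mem_ball.1 hy]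
  refine le_couplingSlope_of_forall fun ε hε => ?_
  set t := min 1 (ε / (2 * ((2 * K + 3) * dist x y)))
  have ht₀ : 0 < t := lt_min one_pos (by positivity)
  have ht₁ : t ≤ 1 := min_le_left _ _
  have htε : (2 * K + 3) * (t * dist x y) < ε := by
    have := (le_div_iff₀ (by positivity)).1 (min_le_right 1 (ε / (2 * ((2 * K + 3) * dist x y))))
    linarith
  have hb' : b + (1 - t) • (y - x) ∈ ball (0 : X) δ := by
    rw [mem_ball_zero_iff]
    calc ‖b + (1 - t) • (y - x)‖ ≤ ‖b‖ + (1 - t) * dist x y := by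
          refine (norm_add_le _ _).trans_eq ?_
          rw [norm_smul, Real.norm_of_nonneg (by linarith), dist_comm, dist_eq_norm]
      _ < δ := by nlinarith
  have hxT := htrans a (by rw [mem_ball_zero_iff]; linarith) _ hb' x
    (mem_ball.2 (by linarith [mem_ball.1 hx]))
  rw [← image_sub_right_image_sub_right] at hxT
  obtain ⟨z, hzA, v, hvB, hzv, hsum⟩ :=
    exists_near_pair_dist_eq_one_sub_mul hxA hyB hxy ht₀ ht₁ hK.le hxT
  have hsum_pos : 0 < dist x z + dist y v := by
    nlinarith [dist_triangle4 x z v y, dist_comm v y]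
  refine ⟨(z, v), fun h => ?_, hsum.trans_lt htε, ?_⟩
  · rw [Prod.mk.injEq] at h
    rw [h.1, h.2] at hzv
    nlinarith
  · rw [coupling_of_mem hxA hyB, coupling_of_mem hzA hvB, hzv,
      ← ENNReal.ofReal_sub _ (mul_nonneg (by linarith) hr.le),
      ← ENNReal.ofReal_div_of_pos hsum_pos]
    refine ENNReal.ofReal_le_ofReal ?_
    rw [div_le_div_iff₀ (by positivity) hsum_pos]
    linarith

end Forward

lemma exists_mem_inter_dist_le_of_lt_couplingSlope {X : Type*} [MetricSpace X] [CompleteSpace X]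
    {A B : Set X} (hA : IsClosed A) (hB : IsClosed B) {α : ℝ} (hα : 0 < α) {u v : X}
    (hu : u ∈ A) (hv : v ∈ B)
    (hslope : ∀ p ∈ A, ∀ q ∈ B, dist u p ≤ dist u v / α →
      dist v q ≤ dist u v / α → p ≠ q → ENNReal.ofReal α < couplingSlope A B p q) :
    ∃ w ∈ A ∩ B, dist u w ≤ dist u v / α := by
  have := hA.completeSpace_coe
  have := hB.completeSpace_coe
  let f : A × B → ℝ := fun p => dist (p.1 : X) p.2
  have hf : LowerSemicontinuous f :=
    ((continuous_subtype_val.comp continuous_fst).dist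
      (continuous_subtype_val.comp continuous_snd)).lowerSemicontinuous
  obtain ⟨q, hq_le, hq_min⟩ := hf.exists_ekeland_point
    ⟨0, forall_mem_range.2 fun _ => dist_nonneg⟩ hα (⟨u, hu⟩, ⟨v, hv⟩)
  have hq_near : dist (⟨u, hu⟩, ⟨v, hv⟩) q ≤ dist u v / α := by
    rw [le_div_iff₀' hα]
    linarith [dist_nonneg (x := (q.1 : X)) (y := q.2)]
  rw [Prod.dist_eq, max_le_iff] at hq_near
  have hq : (q.1 : X) = q.2 := by
    by_contra hne
    refine (hslope q.1 q.1.2 q.2 q.2.2 hq_near.1 hq_near.2 hne).not_ge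
      ((couplingSlope_le_couplingNLSlope _ _).trans
        (couplingNLSlope_le_of_forall q.1.2 q.2.2 hα.le fun p hp p' hp' => ?_))
    have hmin := hq_min (⟨p, hp⟩, ⟨p', hp'⟩)
    have hmax : dist q (⟨p, hp⟩, ⟨p', hp'⟩) ≤ dist (q.1 : X) p + dist (q.2 : X) p' :=
      (Prod.dist_eq ..).trans_le (max_le_add_of_nonneg dist_nonneg dist_nonneg)
    have := mul_le_mul_of_nonneg_left hmax hα.le
    exact hmin.trans (by simp only [f] at *; linarith)
  exact ⟨q.1, ⟨q.1.2, hq ▸ q.2.2⟩, hq_near.1⟩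

lemma exists_mem_inter_dist_le_of_le_couplingSlope_on_ball {X : Type*} [MetricSpace X]
    [CompleteSpace X] {A B : Set X} (hA : IsClosed A) (hB : IsClosed B) {xbar x : X}
    {δ κ α ρ : ℝ} (hα : 0 < α) (hακ : α < κ) (hρδ : 4 * ρ / α + 5 * ρ = δ)
    (hslope : ∀ p ∈ A ∩ ball xbar δ, ∀ q ∈ B ∩ ball xbar δ, p ≠ q →
      ENNReal.ofReal κ ≤ couplingSlope A B p q)
    (hx : dist x xbar < ρ) {u v : X} (hu : u ∈ A) (hv : v ∈ B)
    (huv : dist x u + dist x v < 4 * ρ) :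
    ∃ w ∈ A ∩ B, dist x w ≤ (1 + 1 / α) * (dist x u + dist x v) := by
  have hR : dist u v / α ≤ (dist x u + dist x v) / α := by
    gcongr; exact dist_triangle_left u v x
  have hR' : (dist x u + dist x v) / α < 4 * ρ / α := by gcongr
  have hball {p w} (hp : dist w p ≤ dist u v / α) (hw : dist x w < 4 * ρ) :
      p ∈ ball xbar δ := by
    rw [mem_ball]; linarith [dist_triangle4 p w x xbar, dist_comm p w, dist_comm w x]
  obtain ⟨w, hw, huw⟩ := exists_mem_inter_dist_le_of_lt_couplingSlope hA hB hα hu hv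
    fun p hp q hq hup hvq hpq =>
      ((ENNReal.ofReal_lt_ofReal_iff (hα.trans hακ)).2 hακ).trans_le
        (hslope p ⟨hp, hball hup (by linarith [dist_nonneg (x := x) (y := v)])⟩
          q ⟨hq, hball hvq (by linarith [dist_nonneg (x := x) (y := u)])⟩ hpq)
  refine ⟨w, hw, (dist_triangle x u w).trans ?_⟩
  have : 0 ≤ dist x v := dist_nonneg
  rw [add_mul, one_mul, one_div, inv_mul_eq_div]
  linarith

lemma transversal_of_le_couplingSlope {X : Type*} [NormedAddCommGroup X] [CompleteSpace X]
    {A B : Set X} (hA : IsClosed A) (hB : IsClosed B) {xbar : X} (hx : xbar ∈ A ∩ B)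
    (h : ∃ δ > 0, ∃ κ > 0, ∀ a b : X, ‖a‖ ≤ δ → ‖b‖ ≤ δ →
      ∀ x ∈ ((· - a) '' A) ∩ Metric.ball xbar δ,
        ∀ y ∈ ((· - b) '' B) ∩ Metric.ball xbar δ, x ≠ y →
          ENNReal.ofReal κ ≤ couplingSlope ((· - a) '' A) ((· - b) '' B) x y) :
    Transversal A B xbar := by
  obtain ⟨δ, hδ, κ, hκ, hslope⟩ := h
  obtain ⟨α, hα, hακ⟩ : ∃ α, 0 < α ∧ α < κ :=
    ⟨κ / 2, by positivity, by linarith⟩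
  -- `4ρ / α` bounds the Ekeland displacement and `5ρ` the distance from `xbar` to its start
  obtain ⟨ρ, hρ, hρδ⟩ : ∃ ρ > 0, 4 * ρ / α + 5 * ρ = δ :=
    ⟨δ * α / (4 + 5 * α), by positivity, by field_simp⟩
  have hρδ' : ρ ≤ δ := by linarith [div_pos (mul_pos four_pos hρ) hα]
  refine ⟨1 + 1 / α, by positivity, ρ, hρ, fun a ha b hb x hxρ => ?_⟩
  rw [mem_ball_zero_iff] at ha hb
  have hnear {u v : X} (hu : u ∈ (· - a) '' A) (hv : v ∈ (· - b) '' B) :=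
    exists_mem_inter_dist_le_of_le_couplingSlope_on_ball (hA.image_sub_right a)
      (hB.image_sub_right b) hα hακ hρδ (hslope a b (by linarith) (by linarith))
      (mem_ball.1 hxρ) hu hv
  have hbase : dist x (xbar - a) + dist x (xbar - b) < 4 * ρ := by
    linarith [mem_ball.1 hxρ, dist_triangle x xbar (xbar - a),
      dist_triangle x xbar (xbar - b), dist_self_sub_right xbar a, dist_self_sub_right xbar b]
  refine infEDist_le_mul_add_of_forall (by simp; positivity) ENNReal.ofReal_ne_top
    fun u hu v hv => ?_
  obtain ⟨w, hw, hxw⟩ : ∃ w ∈ (· - a) '' A ∩ (· - b) '' B,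
      dist x w ≤ (1 + 1 / α) * (dist x u + dist x v) := by
    by_cases huv : dist x u + dist x v < 4 * ρ
    · exact hnear hu hv huv
    · -- a far pair is dominated by the near pair `(xbar - a, xbar - b)`
      obtain ⟨w, hw, hxw⟩ := hnear (mem_image_of_mem _ hx.1) (mem_image_of_mem _ hx.2) hbase
      exact ⟨w, hw, hxw.trans (mul_le_mul_of_nonneg_left (by linarith) (by positivity))⟩
  refine (infEDist_le_edist_of_mem hw).trans ?_
  rw [edist_dist, edist_dist, edist_dist, ← ENNReal.ofReal_add dist_nonneg dist_nonneg,
    ← ENNReal.ofReal_mul (by positivity)]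
  exact ENNReal.ofReal_le_ofReal hxw

theorem stmt10 {X : Type*} [NormedAddCommGroup X] [NormedSpace ℝ X] [CompleteSpace X]
    {A B : Set X} (hA : IsClosed A) (hB : IsClosed B) {xbar : X} (hx : xbar ∈ A ∩ B) :
    Transversal A B xbar ↔
      ∃ δ > 0, ∃ κ > 0, ∀ a b : X, ‖a‖ ≤ δ → ‖b‖ ≤ δ →
        ∀ x ∈ ((· - a) '' A) ∩ Metric.ball xbar δ,
          ∀ y ∈ ((· - b) '' B) ∩ Metric.ball xbar δ, x ≠ y →
            ENNReal.ofReal κ ≤ couplingSlope ((· - a) '' A) ((· - b) '' B) x y :=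
  ⟨Transversal.exists_le_couplingSlope, transversal_of_le_couplingSlope hA hB hx⟩
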